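/- Let w∈W and s∈S such that l(sw)=l(w)-1, and let A be a closed subset of Φ^+. Then Φ_w ⊆ {α_s} ∪ s(A∖{α_s}) if and only if w < L(σ_s·(τ∘C)(A)). -/

import Mathlib

noncomputable section

namespace ArtinInj

/-- `altProd a b m` is the alternating product `prod(a,b;m) = abab⋯` with `m` factors. -/
def altProd {G : Type*} [Monoid G] (a b : G) : ℕ → G
  | 0 => 1
  | n + 1 => a * altProd b a n

variable {S : Type} [DecidableEq S] [Fintype S]

/-- The braid relations on the free monoid over `S`.  Here `M s t = 0` encodes
`m_{s,t} = ∞`. -/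
def braidRel (M : CoxeterMatrix S) (u v : FreeMonoid S) : Prop :=
  ∃ s t : S, s ≠ t ∧ M s t ≠ 0 ∧
    u = altProd (FreeMonoid.of s) (FreeMonoid.of t) (M s t) ∧
    v = altProd (FreeMonoid.of t) (FreeMonoid.of s) (M s t)

/-- The Artin monoid `G_Γ⁺` of a Coxeter matrix. -/
abbrev ArtinMonoid (M : CoxeterMatrix S) : Type := PresentedMonoid (braidRel M)

/-- The generators `σ_s` of the Artin monoid. -/
def sigma (M : CoxeterMatrix S) (s : S) : ArtinMonoid M := PresentedMonoid.of (braidRel M) s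

/-- The braid relators in the free group over `S`. -/
def artinRels (M : CoxeterMatrix S) : Set (FreeGroup S) :=
  {r | ∃ s t : S, s ≠ t ∧ M s t ≠ 0 ∧
    r = altProd (FreeGroup.of s) (FreeGroup.of t) (M s t) *
        (altProd (FreeGroup.of t) (FreeGroup.of s) (M s t))⁻¹}

/-- The Artin group `G_Γ` of a Coxeter matrix. -/
abbrev ArtinGroup (M : CoxeterMatrix S) : Type := PresentedGroup (artinRels M)

/-- The generators `σ_s` of the Artin group. -/
def agen (M : CoxeterMatrix S) (s : S) : ArtinGroup M := PresentedGroup.of s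

/-- The partial order on the Artin monoid: `g < h ⟺ ∃ f, g f = h`. -/
def mle {M : CoxeterMatrix S} (g h : ArtinMonoid M) : Prop := ∃ f, g * f = h

/-- A Coxeter matrix is of small type when all off-diagonal entries are 2 or 3. -/
def SmallType (M : CoxeterMatrix S) : Prop := ∀ s t : S, s ≠ t → M s t = 2 ∨ M s t = 3

/-- `m ≥ 3` in `{2,3,...,∞}`, where `∞` is encoded by `0`. -/
def BigEntry (m : ℕ) : Prop := m = 0 ∨ 3 ≤ m

/-- A Coxeter matrix has no triangle when there are no three distinct vertices with
pairwise entries `≥ 3`. -/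
def NoTriangle (M : CoxeterMatrix S) : Prop :=
  ¬ ∃ s t r : S, s ≠ t ∧ s ≠ r ∧ t ≠ r ∧
      BigEntry (M s t) ∧ BigEntry (M s r) ∧ BigEntry (M t r)

variable {W : Type} [Group W]

/-- The partial order `u < v` on the Coxeter group: `l(v) = l(u) + l(u⁻¹ v)`. -/
def wle {M : CoxeterMatrix S} (cs : CoxeterSystem M W) (u v : W) : Prop :=
  cs.length v = cs.length u + cs.length (u⁻¹ * v)

/-- The simple root `α_s`. -/
def sroot (s : S) : S → ℝ := Pi.single s 1

/-- The entries `⟨α_s, α_t⟩ = -2 cos (π / m_{s,t})` of the canonical bilinear form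
(equal to `-2` when `m_{s,t} = ∞`, encoded by `M s t = 0`). -/
def formEnt (M : CoxeterMatrix S) (s t : S) : ℝ :=
  if M s t = 0 then -2 else -2 * Real.cos (Real.pi / (M s t : ℝ))

/-- The canonical symmetric bilinear form `⟨·,·⟩` on `U = ℝ^S`. -/
def form (M : CoxeterMatrix S) (x v : S → ℝ) : ℝ :=
  ∑ s : S, ∑ t : S, x s * v t * formEnt M s t

/-- `ρ` is the canonical (geometric) representation of the Coxeter system. -/
def IsGeomRep (M : CoxeterMatrix S) (cs : CoxeterSystem M W)
    (ρ : W →* ((S → ℝ) →ₗ[ℝ] (S → ℝ))) : Prop :=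
  ∀ (s : S) (x : S → ℝ), ρ (cs.simple s) x = x - form M (sroot s) x • sroot s

/-- The root system `Φ = {w α_s}`. -/
def Phi (ρ : W →* ((S → ℝ) →ₗ[ℝ] (S → ℝ))) : Set (S → ℝ) :=
  {u | ∃ (w : W) (s : S), u = ρ w (sroot s)}

/-- The positive roots `Φ⁺`. -/
def PhiPlus (ρ : W →* ((S → ℝ) →ₗ[ℝ] (S → ℝ))) : Set (S → ℝ) :=
  {u | u ∈ Phi ρ ∧ ∀ s : S, 0 ≤ u s}

/-- The negative roots `Φ⁻ = -Φ⁺`. -/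
def PhiMinus (ρ : W →* ((S → ℝ) →ₗ[ℝ] (S → ℝ))) : Set (S → ℝ) :=
  {u | -u ∈ PhiPlus ρ}

/-- The inversion set `Φ_w = {β ∈ Φ⁺ : w⁻¹ β ∈ Φ⁻}`. -/
def invSet (ρ : W →* ((S → ℝ) →ₗ[ℝ] (S → ℝ))) (w : W) : Set (S → ℝ) :=
  {u | u ∈ PhiPlus ρ ∧ ρ w⁻¹ u ∈ PhiMinus ρ}

/-- The depth `dp(β) = min { l(w) : w β ∈ Φ⁻ }` of a positive root. -/
def dp {M : CoxeterMatrix S} (cs : CoxeterSystem M W)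
    (ρ : W →* ((S → ℝ) →ₗ[ℝ] (S → ℝ))) (u : S → ℝ) : ℕ :=
  sInf {l : ℕ | ∃ w : W, ρ w u ∈ PhiMinus ρ ∧ cs.length w = l}

/-- Closed subsets of `Φ⁺`. -/
def ClosedSub (M : CoxeterMatrix S) (ρ : W →* ((S → ℝ) →ₗ[ℝ] (S → ℝ)))
    (A : Set (S → ℝ)) : Prop :=
  A ⊆ PhiPlus ρ ∧ A.Finite ∧
    (∀ a ∈ A, ∀ b ∈ A, -1 ≤ form M a b) ∧
    (∀ a ∈ A, ∀ b ∈ A, form M a b = -1 → a + b ∈ A)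

/-- The field `K = ℚ(x,y)` of rational functions in two variables over `ℚ`. -/
abbrev KK : Type := FractionRing (MvPolynomial (Fin 2) ℚ)

/-- The variable `x` of `K`. -/
def Xv : KK := algebraMap (MvPolynomial (Fin 2) ℚ) KK (MvPolynomial.X 0)

/-- The variable `y` of `K`. -/
def Yv : KK := algebraMap (MvPolynomial (Fin 2) ℚ) KK (MvPolynomial.X 1)

/-- The image in `K` of a polynomial of `ℚ[y]`. -/
def Ty (p : Polynomial ℚ) : KK := Polynomial.eval₂ (Rat.castHom KK) Yv p

/-- The `K`-vector space `V` with basis `{e_β : β ∈ Φ⁺}`. -/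
abbrev VV (ρ : W →* ((S → ℝ) →ₗ[ℝ] (S → ℝ))) : Type := ↥(PhiPlus ρ) →₀ KK

/-- The basis vectors `e_β` of `V` (defined to be `0` for `β ∉ Φ⁺`). -/
def ebase (ρ : W →* ((S → ℝ) →ₗ[ℝ] (S → ℝ))) (u : S → ℝ) : VV ρ := by
  haveI := Classical.dec (u ∈ PhiPlus ρ)
  exact if h : u ∈ PhiPlus ρ then Finsupp.single (⟨u, h⟩ : ↥(PhiPlus ρ)) (1 : KK) else 0

/-- `φ : S → End(V)` is the family of linear maps `φ_s` of Section 3 of the paper. -/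
def PhiMapSpec (M : CoxeterMatrix S) (ρ : W →* ((S → ℝ) →ₗ[ℝ] (S → ℝ)))
    (φ : S → Module.End KK (VV ρ)) : Prop :=
  ∀ s : S, ∀ u ∈ PhiPlus ρ,
    (u = sroot s → φ s (ebase ρ u) = 0) ∧
    (form M (sroot s) u = 0 → φ s (ebase ρ u) = ebase ρ u) ∧
    (0 < form M (sroot s) u → u ≠ sroot s →
      φ s (ebase ρ u) = Yv • ebase ρ (u - form M (sroot s) u • sroot s)) ∧
    (form M (sroot s) u < 0 →
      φ s (ebase ρ u) = (1 - Yv) • ebase ρ u + ebase ρ (u - form M (sroot s) u • sroot s))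

/-- `T : S × Φ⁺ → ℚ[y]` is the family of polynomials `T(s,β)` defined by (D1)–(D9),
by induction on the depth of `β`; the recursion may be applied with any `t ∈ S`
such that `dp(t β) = dp(β) - 1`. -/
def TSpec (M : CoxeterMatrix S) (cs : CoxeterSystem M W)
    (ρ : W →* ((S → ℝ) →ₗ[ℝ] (S → ℝ))) (T : S → (S → ℝ) → Polynomial ℚ) : Prop :=
  (∀ s : S, T s (sroot s) = Polynomial.X ^ 2) ∧
  (∀ s t : S, t ≠ s → T s (sroot t) = 0) ∧
  (∀ s t : S, ∀ u ∈ PhiPlus ρ, 2 ≤ dp cs ρ u →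
    0 < form M (sroot t) u → dp cs ρ (ρ (cs.simple t) u) = dp cs ρ u - 1 →
    (0 < form M (sroot s) u →
      T s u = Polynomial.X ^ (dp cs ρ u) * (Polynomial.X - 1)) ∧
    (form M (sroot s) u = 0 → form M (sroot s) (sroot t) = 0 →
      T s u = Polynomial.X * T s (u - form M (sroot t) u • sroot t)) ∧
    (form M (sroot s) u = 0 → form M (sroot s) (sroot t) = -1 →
      T s u = (Polynomial.X - 1) * T s (u - form M (sroot t) u • sroot t) +
        Polynomial.X * T t (u - form M (sroot t) u • sroot s - form M (sroot t) u • sroot t)) ∧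
    (form M (sroot s) u < 0 → form M (sroot s) (sroot t) = 0 →
      T s u = Polynomial.X * T s (u - form M (sroot t) u • sroot t)) ∧
    (form M (sroot s) u < 0 → form M (sroot s) (sroot t) = -1 →
      -(form M (sroot s) u) < form M (sroot t) u →
      T s u = (Polynomial.X - 1) * T s (u - form M (sroot t) u • sroot t) +
        Polynomial.X * T t (u - (form M (sroot t) u + form M (sroot s) u) • sroot s
          - form M (sroot t) u • sroot t)) ∧
    (form M (sroot s) u < 0 → form M (sroot s) (sroot t) = -1 →
      -(form M (sroot s) u) = form M (sroot t) u →
      T s u = T t (u - form M (sroot t) u • sroot t) +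
        (Polynomial.X - 1) * T s (u - form M (sroot t) u • sroot t)) ∧
    (form M (sroot s) u < 0 → form M (sroot s) (sroot t) = -1 →
      form M (sroot t) u < -(form M (sroot s) u) →
      T s u = Polynomial.X * T s (u - form M (sroot t) u • sroot t) +
        T t (u - form M (sroot t) u • sroot t) +
        Polynomial.X ^ (dp cs ρ u - 1) * (1 - Polynomial.X)))

/-- `ψ : S → End(V)` is the family of linear maps `ψ_s(e_β) = φ_s(e_β) + x T(s,β) e_{α_s}`. -/
def PsiSpec (M : CoxeterMatrix S) (ρ : W →* ((S → ℝ) →ₗ[ℝ] (S → ℝ)))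
    (T : S → (S → ℝ) → Polynomial ℚ) (ψ : S → Module.End KK (VV ρ)) : Prop :=
  ∀ s : S, ∀ u ∈ PhiPlus ρ,
    (u = sroot s → ψ s (ebase ρ u) = (Xv * Ty (T s u)) • ebase ρ (sroot s)) ∧
    (form M (sroot s) u = 0 →
      ψ s (ebase ρ u) = ebase ρ u + (Xv * Ty (T s u)) • ebase ρ (sroot s)) ∧
    (0 < form M (sroot s) u → u ≠ sroot s →
      ψ s (ebase ρ u) = Yv • ebase ρ (u - form M (sroot s) u • sroot s) +
        (Xv * Ty (T s u)) • ebase ρ (sroot s)) ∧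
    (form M (sroot s) u < 0 →
      ψ s (ebase ρ u) = (1 - Yv) • ebase ρ u +
        ebase ρ (u - form M (sroot s) u • sroot s) +
        (Xv * Ty (T s u)) • ebase ρ (sroot s))

/-- The set `σ_s ∗ A` (Lemma 4.4 of the paper). -/
def starSet (M : CoxeterMatrix S) (ρ : W →* ((S → ℝ) →ₗ[ℝ] (S → ℝ)))
    (s : S) (A : Set (S → ℝ)) : Set (S → ℝ) :=
  {sroot s} ∪
  {u | u ∈ PhiPlus ρ ∧ form M (sroot s) u = 0 ∧ u ∈ A} ∪
  {u | u ∈ PhiPlus ρ ∧ 0 < form M (sroot s) u ∧ u ≠ sroot s ∧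
        u - form M (sroot s) u • sroot s ∈ A} ∪
  {u | u ∈ PhiPlus ρ ∧ form M (sroot s) u < 0 ∧ u ∈ A ∧
        u - form M (sroot s) u • sroot s ∈ A}


set_option linter.unusedSectionVars false
set_option maxHeartbeats 1000000

theorem map_altProd {G H : Type*} [Monoid G] [Monoid H] (F : G →* H) (a b : G) (n : ℕ) :
    F (altProd a b n) = altProd (F a) (F b) n := by
  induction n generalizing a b with
  | zero => simp [altProd]
  | succ n ih => simp [altProd, ih]

theorem mul_pow_swap {G : Type*} [Monoid G] (a b : G) (k : ℕ) :
    a * (b * a) ^ k = (a * b) ^ k * a := by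
  induction k with
  | zero => simp
  | succ k ih =>
    calc a * (b*a)^(k+1) = (a * (b*a)^k) * (b*a) := by rw [pow_succ, ← mul_assoc]
    _ = ((a*b)^k * a) * (b * a) := by rw [ih]
    _ = ((a*b)^k * (a*b)) * a := by simp only [mul_assoc]
    _ = (a*b)^(k+1) * a := by rw [pow_succ]

theorem altProd_eq_pow {G : Type*} [Monoid G] (a b : G) (n : ℕ) :
    altProd a b n = (a * b) ^ (n / 2) * (if Even n then 1 else a) := by
  induction n generalizing a b with
  | zero => simp [altProd]
  | succ n ih =>
    rw [altProd, ih]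
    rcases Nat.even_or_odd n with he | ho
    · have h2 : (n+1) / 2 = n / 2 := by rcases he with ⟨k, hk⟩; omega
      have hne : ¬ Even (n+1) := by simp [Nat.even_add_one, he]
      rw [if_pos he, if_neg hne, h2, mul_one]
      exact mul_pow_swap a b (n/2)
    · have hev : Even (n+1) := by simp [Nat.even_add_one, Nat.not_even_iff_odd.2 ho]
      have h2 : (n+1)/2 = n/2 + 1 := by rcases ho with ⟨k,hk⟩; omega
      rw [if_neg (Nat.not_even_iff_odd.2 ho), if_pos hev, h2, mul_one, pow_succ,
        ← mul_assoc, ← mul_assoc, mul_pow_swap]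

theorem altProd_self {G : Type*} [Monoid G] (a : G) (n : ℕ) : altProd a a n = a ^ n := by
  induction n with
  | zero => simp [altProd]
  | succ n ih => rw [altProd, ih, pow_succ']

theorem altProd_swap {G : Type*} [Group G] {a b : G} (ha : a * a = 1) (hb : b * b = 1)
    {m : ℕ} (hm : (a * b) ^ m = 1) : altProd a b m = altProd b a m := by
  have hainv : a⁻¹ = a := by rw [inv_eq_iff_mul_eq_one, ha]
  have hbinv : b⁻¹ = b := by rw [inv_eq_iff_mul_eq_one, hb]
  have hba : b * a = (a * b)⁻¹ := by rw [mul_inv_rev, hainv, hbinv]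
  rw [altProd_eq_pow, altProd_eq_pow]
  rcases Nat.even_or_odd m with hev | hod
  · rw [if_pos hev, if_pos hev, mul_one, mul_one, hba, inv_pow]
    rw [eq_inv_iff_mul_eq_one, ← pow_add]
    obtain ⟨k, hk⟩ := hev
    have h2 : m / 2 + m / 2 = m := by omega
    rw [h2, hm]
  · rw [if_neg (Nat.not_even_iff_odd.2 hod), if_neg (Nat.not_even_iff_odd.2 hod), hba, inv_pow]
    obtain ⟨k, hk⟩ := hod
    have hk2 : m / 2 = k := by omega
    rw [hk2]
    have hinv : ((a*b)^k)⁻¹ = (a*b)^(k+1) := by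
      apply inv_eq_of_mul_eq_one_right
      rw [← pow_add]
      have : k + (k+1) = m := by omega
      rw [this, hm]
    rw [hinv]
    calc (a*b)^k * a = (a*b)^k * (a * (b * b)) := by rw [hb, mul_one]
    _ = (a*b)^(k+1) * b := by rw [pow_succ, mul_assoc, mul_assoc]


-- ## form entries
theorem formEnt_diag (M : CoxeterMatrix S) (s : S) : formEnt M s s = 2 := by
  rw [formEnt, if_neg (by simp [M.diagonal s]), M.diagonal s]
  simp [Real.cos_pi]

theorem formEnt_symm (M : CoxeterMatrix S) (s t : S) : formEnt M s t = formEnt M t s := by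
  rw [formEnt, formEnt, M.symmetric s t]

theorem formEnt_of_two {M : CoxeterMatrix S} {s t : S} (h : M s t = 2) : formEnt M s t = 0 := by
  rw [formEnt, if_neg (by omega), h]
  norm_num [Real.cos_pi_div_two]

theorem formEnt_of_three {M : CoxeterMatrix S} {s t : S} (h : M s t = 3) :
    formEnt M s t = -1 := by
  rw [formEnt, if_neg (by omega), h]
  norm_num [Real.cos_pi_div_three]

-- ## bilinearity
theorem form_single_left (M : CoxeterMatrix S) (s : S) (y : S → ℝ) :
    form M (sroot s) y = ∑ t : S, y t * formEnt M s t := by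
  rw [form]
  rw [Finset.sum_eq_single s]
  · simp [sroot, Pi.single_eq_same]
  · intro b _ hb
    simp [sroot, Pi.single_eq_of_ne hb]
  · simp

theorem form_sroot_sroot (M : CoxeterMatrix S) (s t : S) :
    form M (sroot s) (sroot t) = formEnt M s t := by
  rw [form_single_left, Finset.sum_eq_single t]
  · simp [sroot, Pi.single_eq_same]
  · intro b _ hb
    simp [sroot, Pi.single_eq_of_ne hb]
  · simp

theorem form_sub_left (M : CoxeterMatrix S) (x y z : S → ℝ) :
    form M (x - y) z = form M x z - form M y z := by
  simp [form, sub_mul, Finset.sum_sub_distrib]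

theorem form_sub_right (M : CoxeterMatrix S) (x y z : S → ℝ) :
    form M x (y - z) = form M x y - form M x z := by
  simp [form, sub_mul, mul_sub, Finset.sum_sub_distrib]

theorem form_add_right (M : CoxeterMatrix S) (x y z : S → ℝ) :
    form M x (y + z) = form M x y + form M x z := by
  simp [form, add_mul, mul_add, Finset.sum_add_distrib]

theorem form_smul_left (M : CoxeterMatrix S) (c : ℝ) (x z : S → ℝ) :
    form M (c • x) z = c * form M x z := by
  simp [form, Finset.mul_sum, smul_eq_mul]
  ring_nf

theorem form_smul_right (M : CoxeterMatrix S) (c : ℝ) (x z : S → ℝ) :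
    form M x (c • z) = c * form M x z := by
  simp [form, Finset.mul_sum, smul_eq_mul]
  ring_nf
  congr 1; funext a; congr 1; funext b; ring

theorem form_neg_right (M : CoxeterMatrix S) (x z : S → ℝ) :
    form M x (-z) = - form M x z := by
  have : -z = (-1 : ℝ) • z := by funext u; simp
  rw [this, form_smul_right]; ring

theorem form_symm (M : CoxeterMatrix S) (x y : S → ℝ) : form M x y = form M y x := by
  rw [form, form, Finset.sum_comm]
  congr 1; funext a; congr 1; funext b
  rw [formEnt_symm]; ring


set_option linter.unusedSectionVars false

theorem sroot_apply (s u : S) : sroot s u = if u = s then 1 else 0 := by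
  rw [sroot, Pi.single_apply]

theorem sroot_self (s : S) : sroot s s = (1 : ℝ) := Pi.single_eq_same s 1
theorem sroot_ne {s t : S} (h : t ≠ s) : sroot s t = (0 : ℝ) := Pi.single_eq_of_ne h 1

section rho
variable {M : CoxeterMatrix S} (cs : CoxeterSystem M W)
  (rho : W →* ((S → ℝ) →ₗ[ℝ] (S → ℝ))) (hrho : IsGeomRep M cs rho)

include hrho

theorem rho_mul_apply (u v : W) (x : S → ℝ) : rho (u * v) x = rho u (rho v x) := by
  rw [map_mul]; rfl

theorem rho_one_apply (x : S → ℝ) : rho 1 x = x := by rw [map_one]; rfl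

theorem rho_simple_sroot (s t : S) :
    rho (cs.simple s) (sroot t) = sroot t - formEnt M s t • sroot s := by
  rw [hrho s (sroot t), form_sroot_sroot]

theorem rho_simple_self (s : S) : rho (cs.simple s) (sroot s) = -sroot s := by
  rw [rho_simple_sroot cs rho hrho, formEnt_diag]
  funext u; simp; ring

theorem rho_inv_cancel (w : W) (x : S → ℝ) : rho w⁻¹ (rho w x) = x := by
  rw [← rho_mul_apply cs rho hrho, inv_mul_cancel, rho_one_apply cs rho hrho]

theorem form_rho_simple (s : S) (x y : S → ℝ) :
    form M (rho (cs.simple s) x) (rho (cs.simple s) y) = form M x y := by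
  simp only [hrho s x, hrho s y, form_sub_left, form_sub_right, form_smul_left,
    form_smul_right, form_sroot_sroot, formEnt_diag]
  have h1 : form M x (sroot s) = form M (sroot s) x := form_symm M _ _
  rw [h1]
  ring

theorem form_rho (w : W) (x y : S → ℝ) :
    form M (rho w x) (rho w y) = form M x y := by
  obtain ⟨ω, -, hw⟩ := cs.exists_reduced_word' w
  subst hw
  induction ω generalizing x y with
  | nil => rw [cs.wordProd_nil, rho_one_apply cs rho hrho, rho_one_apply cs rho hrho]
  | cons a ω ih =>
    rw [cs.wordProd_cons, rho_mul_apply cs rho hrho, rho_mul_apply cs rho hrho,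
      form_rho_simple cs rho hrho, ih]

-- ## roots
theorem sroot_mem_Phi (s : S) : sroot s ∈ Phi rho := ⟨1, s, (rho_one_apply cs rho hrho _).symm⟩

theorem sroot_mem_PhiPlus (s : S) : sroot s ∈ PhiPlus rho := by
  refine ⟨sroot_mem_Phi cs rho hrho s, fun t => ?_⟩
  rcases eq_or_ne t s with rfl | h
  · simp [sroot, Pi.single_eq_same]
  · simp [sroot, Pi.single_eq_of_ne h]

theorem rho_mem_Phi {u : S → ℝ} (w : W) (hu : u ∈ Phi rho) : rho w u ∈ Phi rho := by
  obtain ⟨w', s, rfl⟩ := hu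
  exact ⟨w * w', s, (rho_mul_apply cs rho hrho w w' _).symm⟩

theorem Phi_ne_zero {u : S → ℝ} (hu : u ∈ Phi rho) : u ≠ 0 := by
  obtain ⟨w, s, rfl⟩ := hu
  intro h
  have h2 : rho w⁻¹ (rho w (sroot s)) = rho w⁻¹ 0 := by rw [h]
  rw [rho_inv_cancel cs rho hrho, map_zero] at h2
  have := congrFun h2 s
  simp [sroot, Pi.single_eq_same] at this

theorem form_self_root {u : S → ℝ} (hu : u ∈ Phi rho) : form M u u = 2 := by
  obtain ⟨w, s, rfl⟩ := hu
  rw [form_rho cs rho hrho, form_sroot_sroot, formEnt_diag]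

theorem not_mem_PhiMinus {u : S → ℝ} (hu : u ∈ PhiPlus rho) : u ∉ PhiMinus rho := by
  intro hmin
  apply Phi_ne_zero cs rho hrho hu.1
  funext t
  have h1 := hu.2 t
  have h2 := hmin.2 t
  simp only [Pi.neg_apply] at h2
  have : u t = 0 := by linarith
  simpa using this


-- ## dihedral enumeration
theorem dihedral_enum_two (s t : S)
    (hcomm : cs.simple s * cs.simple t = cs.simple t * cs.simple s) :
    ∀ ω : List S, (∀ x ∈ ω, x = s ∨ x = t) →
      cs.wordProd ω = 1 ∨ cs.wordProd ω = cs.simple s ∨ cs.wordProd ω = cs.simple t ∨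
      cs.wordProd ω = cs.simple s * cs.simple t := by
  intro ω
  induction ω with
  | nil => intro _; left; exact cs.wordProd_nil
  | cons x ω ih =>
    intro halph
    have hx := halph x (by simp)
    have hω := ih (fun y hy => halph y (by simp [hy]))
    rw [cs.wordProd_cons]
    rcases hx with hx | hx <;> rw [hx]
    · rcases hω with h | h | h | h <;> rw [h]
      · right; left; rw [mul_one]
      · left; exact cs.simple_mul_simple_self s
      · right; right; right; rfl
      · right; right; left
        rw [← mul_assoc, cs.simple_mul_simple_self, one_mul]
    · rcases hω with h | h | h | h <;> rw [h]
      · right; right; left; rw [mul_one]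
      · right; right; right; exact hcomm.symm
      · left; exact cs.simple_mul_simple_self t
      · right; left
        rw [← mul_assoc, ← hcomm, mul_assoc, cs.simple_mul_simple_self, mul_one]

theorem dihedral_enum_three (s t : S)
    (hbr : cs.simple s * cs.simple t * cs.simple s = cs.simple t * cs.simple s * cs.simple t) :
    ∀ ω : List S, (∀ x ∈ ω, x = s ∨ x = t) →
      cs.wordProd ω = 1 ∨ cs.wordProd ω = cs.simple s ∨ cs.wordProd ω = cs.simple t ∨
      cs.wordProd ω = cs.simple s * cs.simple t ∨ cs.wordProd ω = cs.simple t * cs.simple s ∨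
      cs.wordProd ω = cs.simple s * cs.simple t * cs.simple s := by
  intro ω
  induction ω with
  | nil => intro _; left; exact cs.wordProd_nil
  | cons x ω ih =>
    intro halph
    have hx := halph x (by simp)
    have hω := ih (fun y hy => halph y (by simp [hy]))
    rw [cs.wordProd_cons]
    rcases hx with hx | hx <;> rw [hx]
    · rcases hω with h | h | h | h | h | h <;> rw [h]
      · right; left; rw [mul_one]
      · left; exact cs.simple_mul_simple_self s
      · right; right; right; left; rfl
      · right; right; left
        rw [← mul_assoc, cs.simple_mul_simple_self, one_mul]
      · right; right; right; right; right; rw [← mul_assoc]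
      · right; right; right; right; left
        rw [← mul_assoc, ← mul_assoc, cs.simple_mul_simple_self, one_mul]
    · rcases hω with h | h | h | h | h | h <;> rw [h]
      · right; right; left; rw [mul_one]
      · right; right; right; right; left; rfl
      · left; exact cs.simple_mul_simple_self t
      · right; right; right; right; right
        rw [← mul_assoc, ← hbr]
      · right; left
        rw [← mul_assoc, cs.simple_mul_simple_self, one_mul]
      · right; right; right; left
        calc cs.simple t * (cs.simple s * cs.simple t * cs.simple s)
            = (cs.simple t * cs.simple s * cs.simple t) * cs.simple s := by
              simp only [mul_assoc]
          _ = (cs.simple s * cs.simple t * cs.simple s) * cs.simple s := by rw [← hbr]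
          _ = cs.simple s * cs.simple t := by
              rw [mul_assoc, cs.simple_mul_simple_self, mul_one]

-- ## dihedral values (s ≠ t)
theorem val_t_two {s t : S} (h : M s t = 2) :
    rho (cs.simple t) (sroot s) = sroot s := by
  rw [rho_simple_sroot cs rho hrho, formEnt_symm, formEnt_of_two h]
  simp

theorem val_st_two {s t : S} (h : M s t = 2) :
    rho (cs.simple s * cs.simple t) (sroot s) = -sroot s := by
  rw [rho_mul_apply cs rho hrho, val_t_two cs rho hrho h, rho_simple_self cs rho hrho]

theorem val_ts_two {s t : S} (h : M s t = 2) :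
    rho (cs.simple t * cs.simple s) (sroot s) = -sroot s := by
  rw [rho_mul_apply cs rho hrho, rho_simple_self cs rho hrho, map_neg,
    val_t_two cs rho hrho h]

theorem val_t_three {s t : S} (h : M s t = 3) :
    rho (cs.simple t) (sroot s) = sroot s + sroot t := by
  rw [rho_simple_sroot cs rho hrho, formEnt_symm, formEnt_of_three h]
  funext u; simp

theorem val_s_of_t_three {s t : S} (h : M s t = 3) :
    rho (cs.simple s) (sroot t) = sroot t + sroot s := by
  rw [rho_simple_sroot cs rho hrho, formEnt_of_three h]
  funext u; simp

theorem val_st_three {s t : S} (h : M s t = 3) :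
    rho (cs.simple s * cs.simple t) (sroot s) = sroot t := by
  rw [rho_mul_apply cs rho hrho, val_t_three cs rho hrho h, map_add,
    rho_simple_self cs rho hrho, val_s_of_t_three cs rho hrho h]
  funext u; simp

theorem val_ts_three {s t : S} (h : M s t = 3) :
    rho (cs.simple t * cs.simple s) (sroot s) = -(sroot s + sroot t) := by
  rw [rho_mul_apply cs rho hrho, rho_simple_self cs rho hrho, map_neg,
    val_t_three cs rho hrho h]

theorem val_sts_three {s t : S} (h : M s t = 3) :
    rho (cs.simple s * cs.simple t * cs.simple s) (sroot s) = -sroot t := by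
  rw [rho_mul_apply cs rho hrho, rho_simple_self cs rho hrho, map_neg,
    val_st_three cs rho hrho h]


theorem dihedral_pos {s t : S} (hst : s ≠ t) (hsm : M s t = 2 ∨ M s t = 3) (ω : List S)
    (halph : ∀ x ∈ ω, x = s ∨ x = t)
    (hβ : ∀ ω'' : List S, (∀ x ∈ ω'', x = s ∨ x = t) →
      cs.wordProd ω'' = cs.wordProd ω * cs.simple s → ω.length < ω''.length) :
    ∃ a b : ℝ, 0 ≤ a ∧ 0 ≤ b ∧
      rho (cs.wordProd ω) (sroot s) = a • sroot s + b • sroot t := by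
  have hts : t ≠ s := hst.symm
  have hempty : cs.wordProd ([] : List S) = 1 := cs.wordProd_nil
  have hsingle : ∀ x : S, cs.wordProd [x] = cs.simple x := by
    intro x; rw [cs.wordProd_cons, cs.wordProd_nil, mul_one]
  have hpair : ∀ x y : S, cs.wordProd [x, y] = cs.simple x * cs.simple y := by
    intro x y; rw [cs.wordProd_cons, hsingle]
  rcases hsm with h2 | h3
  · -- m = 2
    have hcomm : cs.simple s * cs.simple t = cs.simple t * cs.simple s := by
      have hp : (cs.simple s * cs.simple t) ^ 2 = 1 := by
        have := cs.simple_mul_simple_pow s t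
        rwa [h2] at this
      have heq : cs.simple s * cs.simple t = (cs.simple s * cs.simple t)⁻¹ := by
        rw [eq_inv_iff_mul_eq_one, ← pow_two, hp]
      rw [heq, mul_inv_rev, cs.inv_simple, cs.inv_simple]
    rcases dihedral_enum_two cs rho hrho s t hcomm ω halph with h | h | h | h
    · refine ⟨1, 0, by norm_num, by norm_num, ?_⟩
      rw [h, rho_one_apply cs rho hrho]
      funext u; simp
    · exfalso
      have := hβ [] (by simp) (by rw [hempty, h, cs.simple_mul_simple_self])
      simp at this
    · refine ⟨1, 0, by norm_num, by norm_num, ?_⟩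
      rw [h, val_t_two cs rho hrho h2]
      funext u; simp
    · exfalso
      have hw : cs.wordProd [t] = cs.wordProd ω * cs.simple s := by
        rw [hsingle, h, mul_assoc, ← hcomm, ← mul_assoc, cs.simple_mul_simple_self, one_mul]
      have hlen := hβ [t] (by simp) hw
      have hnil : ω = [] := by simpa using hlen
      rw [hnil, hempty] at h
      have e2 : rho (1 : W) (sroot s) = -sroot s := by
        rw [h]; exact val_st_two cs rho hrho h2
      rw [rho_one_apply cs rho hrho] at e2
      have := congrFun e2 s
      norm_num [sroot_apply, hst, hts] at this
  · -- m = 3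
    have hbr : cs.simple s * cs.simple t * cs.simple s
        = cs.simple t * cs.simple s * cs.simple t := by
      have hp : (cs.simple s * cs.simple t) ^ 3 = 1 := by
        have := cs.simple_mul_simple_pow s t
        rwa [h3] at this
      have key : (cs.simple s * cs.simple t * cs.simple s)
          * (cs.simple t * cs.simple s * cs.simple t) = 1 := by
        calc (cs.simple s * cs.simple t * cs.simple s)
            * (cs.simple t * cs.simple s * cs.simple t)
            = (cs.simple s * cs.simple t) ^ 3 := by
              rw [pow_succ, pow_two]; simp only [mul_assoc]
          _ = 1 := hp
      have heq := eq_inv_of_mul_eq_one_left key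
      rw [heq]
      simp [mul_inv_rev, cs.inv_simple, mul_assoc]
    rcases dihedral_enum_three cs rho hrho s t hbr ω halph with h | h | h | h | h | h
    · refine ⟨1, 0, by norm_num, by norm_num, ?_⟩
      rw [h, rho_one_apply cs rho hrho]
      funext u; simp
    · exfalso
      have := hβ [] (by simp) (by rw [hempty, h, cs.simple_mul_simple_self])
      simp at this
    · refine ⟨1, 1, by norm_num, by norm_num, ?_⟩
      rw [h, val_t_three cs rho hrho h3]
      funext u; simp
    · refine ⟨0, 1, by norm_num, by norm_num, ?_⟩
      rw [h, val_st_three cs rho hrho h3]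
      funext u; simp
    · exfalso
      have hw : cs.wordProd [t] = cs.wordProd ω * cs.simple s := by
        rw [hsingle, h, mul_assoc, cs.simple_mul_simple_self, mul_one]
      have hlen := hβ [t] (by simp) hw
      have hnil : ω = [] := by simpa using hlen
      rw [hnil, hempty] at h
      have e2 : rho (1 : W) (sroot s) = -(sroot s + sroot t) := by
        rw [h]; exact val_ts_three cs rho hrho h3
      rw [rho_one_apply cs rho hrho] at e2
      have := congrFun e2 s
      norm_num [sroot_apply, hst, hts] at this
    · exfalso
      have hw : cs.wordProd [s, t] = cs.wordProd ω * cs.simple s := by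
        rw [hpair, h, mul_assoc, cs.simple_mul_simple_self, mul_one]
      have hlen := hβ [s, t] (by intro x hx; simp at hx; tauto) hw
      have hlt : ω.length < 2 := by simpa using hlen
      have hval : rho (cs.wordProd ω) (sroot s) = -sroot t := by
        rw [h]; exact val_sts_three cs rho hrho h3
      rcases ω with _ | ⟨x, _ | ⟨y, ω'⟩⟩
      · rw [hempty, rho_one_apply cs rho hrho] at hval
        have := congrFun hval s
        norm_num [sroot_apply, hst, hts] at this
      · rcases halph x (by simp) with hx | hx <;> rw [hsingle, hx] at hval
        · rw [rho_simple_self cs rho hrho] at hval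
          have := congrFun hval s
          norm_num [sroot_apply, hst, hts] at this
        · rw [val_t_three cs rho hrho h3] at hval
          have := congrFun hval s
          norm_num [sroot_apply, hst, hts] at this
      · simp only [List.length_cons] at hlt; omega


theorem fund (hsmall : SmallType M) : ∀ n : ℕ, ∀ w : W, ∀ s : S, cs.length w = n →
    cs.length (w * cs.simple s) = cs.length w + 1 → ∀ u : S, 0 ≤ rho w (sroot s) u := by
  intro n
  induction n using Nat.strong_induction_on with
  | _ n ih =>
    intro w s hn hlen u
    rcases eq_or_ne w 1 with rfl | hw1
    · rw [rho_one_apply cs rho hrho, sroot_apply]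
      split <;> norm_num
    · obtain ⟨t, ht⟩ := cs.exists_rightDescent_of_ne_one hw1
      rw [CoxeterSystem.IsRightDescent] at ht
      have hst : s ≠ t := by
        rintro rfl
        omega
      classical
      have hex : ∃ k : ℕ, ∃ v : W, ∃ ω : List S, (∀ x ∈ ω, x = s ∨ x = t) ∧
          w = v * cs.wordProd ω ∧ cs.length w = cs.length v + ω.length ∧ cs.length v = k :=
        ⟨cs.length w, w, [], by simp, by rw [cs.wordProd_nil, mul_one], by simp, rfl⟩
      obtain ⟨v, ω, halph, hprod, hadd, hkdef⟩ := Nat.find_spec hex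
      -- (i) minimality implies v has both x = s and x = t ascents
      have hi : ∀ x : S, (x = s ∨ x = t) → cs.length (v * cs.simple x) = cs.length v + 1 := by
        intro x hx
        rcases cs.length_mul_simple v x with h | h
        · exact h
        · exfalso
          have hne := cs.length_mul_simple_ne v x
          have hvpos : 1 ≤ cs.length v := by omega
          have hPk : ∃ v' : W, ∃ ω' : List S, (∀ y ∈ ω', y = s ∨ y = t) ∧
              w = v' * cs.wordProd ω' ∧ cs.length w = cs.length v' + ω'.length ∧
              cs.length v' = cs.length v - 1 := by
            refine ⟨v * cs.simple x, x :: ω, ?_, ?_, ?_, by omega⟩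
            · intro y hy
              rcases List.mem_cons.1 hy with rfl | hy'
              · exact hx
              · exact halph y hy'
            · rw [cs.wordProd_cons, mul_assoc, cs.simple_mul_simple_cancel_left, hprod]
            · rw [List.length_cons]
              omega
          have hlt : cs.length v - 1 < Nat.find hex := by omega
          exact Nat.find_min hex hlt hPk
      -- (ii) ω nonempty
      have hωne : ω ≠ [] := by
        rintro rfl
        rw [cs.wordProd_nil, mul_one] at hprod
        have := hi t (Or.inr rfl)
        rw [← hprod] at this
        omega
      -- (iii) the divisibility condition
      have hβ : ∀ ω'' : List S, (∀ x ∈ ω'', x = s ∨ x = t) →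
          cs.wordProd ω'' = cs.wordProd ω * cs.simple s → ω.length < ω''.length := by
        intro ω'' halph'' heq
        by_contra hc
        push_neg at hc
        have hkey : cs.length (w * cs.simple s) ≤ cs.length v + ω''.length := by
          have hws : w * cs.simple s = v * cs.wordProd ω'' := by
            rw [hprod, mul_assoc, ← heq]
          rw [hws]
          calc cs.length (v * cs.wordProd ω'')
              ≤ cs.length v + cs.length (cs.wordProd ω'') := cs.length_mul_le _ _
            _ ≤ cs.length v + ω''.length := by
                have := cs.length_wordProd_le ω''
                omega
        omega
      obtain ⟨a, b, ha, hb, hval⟩ :=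
        dihedral_pos cs rho hrho hst (hsmall s t hst) ω halph hβ
      have hvw : rho w (sroot s) = a • rho v (sroot s) + b • rho v (sroot t) := by
        rw [hprod, rho_mul_apply cs rho hrho, hval, map_add, map_smul, map_smul]
      rw [hvw]
      have hvlt : cs.length v < n := by
        have : 1 ≤ ω.length := List.length_pos_iff.2 hωne
        omega
      have ihs := ih (cs.length v) hvlt v s rfl (hi s (Or.inl rfl)) u
      have iht := ih (cs.length v) hvlt v t rfl (hi t (Or.inr rfl)) u
      simp only [Pi.add_apply, Pi.smul_apply, smul_eq_mul]
      exact add_nonneg (mul_nonneg ha ihs) (mul_nonneg hb iht)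

theorem fund' (hsmall : SmallType M) {w : W} {s : S}
    (hlen : cs.length (w * cs.simple s) = cs.length w + 1) :
    rho w (sroot s) ∈ PhiPlus rho :=
  ⟨⟨w, s, rfl⟩, fund cs rho hrho hsmall (cs.length w) w s rfl hlen⟩

theorem dichotomy (hsmall : SmallType M) {u : S → ℝ} (hu : u ∈ Phi rho) :
    u ∈ PhiPlus rho ∨ u ∈ PhiMinus rho := by
  obtain ⟨w, s, rfl⟩ := hu
  rcases cs.length_mul_simple w s with h | h
  · exact Or.inl (fund' cs rho hrho hsmall h)
  · right
    have hne := cs.length_mul_simple_ne w s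
    have hw1 : 1 ≤ cs.length w := by omega
    have hcan : w * cs.simple s * cs.simple s = w := cs.simple_mul_simple_cancel_right s
    have hlen2 : cs.length ((w * cs.simple s) * cs.simple s) = cs.length (w * cs.simple s) + 1 := by
      rw [hcan]; omega
    have hpos := fund' cs rho hrho hsmall hlen2
    have hval : rho (w * cs.simple s) (sroot s) = -(rho w (sroot s)) := by
      rw [rho_mul_apply cs rho hrho, rho_simple_self cs rho hrho, map_neg]
    rw [PhiMinus, Set.mem_setOf_eq, ← hval]
    exact hpos

theorem pos_of_simple_ne (hsmall : SmallType M) {s : S} {u : S → ℝ}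
    (hu : u ∈ PhiPlus rho) (hne : u ≠ sroot s) :
    rho (cs.simple s) u ∈ PhiPlus rho := by
  have hΦ : rho (cs.simple s) u ∈ Phi rho := rho_mem_Phi cs rho hrho _ hu.1
  rcases dichotomy cs rho hrho hsmall hΦ with h | h
  · exact h
  · exfalso
    -- all coordinates of u away from s vanish
    have hcoord : ∀ t : S, t ≠ s → u t = 0 := by
      intro t hts
      have h1 : rho (cs.simple s) u t = u t := by
        rw [hrho s u]
        simp only [Pi.sub_apply, Pi.smul_apply, smul_eq_mul]
        rw [sroot_apply, if_neg hts]
        ring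
      have h2 := h.2 t
      simp only [Pi.neg_apply] at h2
      rw [h1] at h2
      have h3 := hu.2 t
      linarith
    have hus : u = u s • sroot s := by
      funext t
      rcases eq_or_ne t s with rfl | hts
      · simp [sroot_apply]
      · simp [sroot_apply, hts, hcoord t hts]
    have hform := form_self_root cs rho hrho hu.1
    rw [hus, form_smul_left, form_smul_right, form_sroot_sroot, formEnt_diag] at hform
    have hsq : u s * u s = 1 := by nlinarith
    have hge := hu.2 s
    have hu1 : u s = 1 := by nlinarith
    apply hne
    rw [hus, hu1, one_smul]

theorem sroot_not_mem_invSet (hsmall : SmallType M) {v : W} {s : S}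
    (h : cs.length (cs.simple s * v) = cs.length v + 1) : sroot s ∉ invSet rho v := by
  rintro ⟨-, hmin⟩
  have hinv : (v⁻¹ * cs.simple s)⁻¹ = cs.simple s * v := by
    rw [mul_inv_rev, inv_inv, cs.inv_simple]
  have hlen : cs.length (v⁻¹ * cs.simple s) = cs.length v⁻¹ + 1 := by
    rw [← cs.length_inv, hinv, h, cs.length_inv]
  exact not_mem_PhiMinus cs rho hrho (fund' cs rho hrho hsmall hlen) hmin

theorem rho_simple_invol (s : S) (x : S → ℝ) :
    rho (cs.simple s) (rho (cs.simple s) x) = x := by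
  rw [← rho_mul_apply cs rho hrho, cs.simple_mul_simple_self, rho_one_apply cs rho hrho]

theorem stepA (hsmall : SmallType M) {w : W} {s : S}
    (hlen : cs.length w = cs.length (cs.simple s * w) + 1) (A : Set (S → ℝ)) :
    invSet rho w ⊆ insert (sroot s) (rho (cs.simple s) '' (A \ {sroot s})) ↔
      invSet rho (cs.simple s * w) ⊆ A := by
  set v := cs.simple s * w with hv
  have hcancel : cs.simple s * v = w := by rw [hv, cs.simple_mul_simple_cancel_left]
  have hvlen : cs.length (cs.simple s * v) = cs.length v + 1 := by rw [hcancel]; omega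
  have hαnot : sroot s ∉ invSet rho v := sroot_not_mem_invSet cs rho hrho hsmall hvlen
  have hwinv : w⁻¹ = v⁻¹ * cs.simple s := by
    rw [← hcancel, mul_inv_rev, cs.inv_simple]
  have hvinv : v⁻¹ = w⁻¹ * cs.simple s := by
    rw [hwinv, mul_assoc, cs.simple_mul_simple_self, mul_one]
  -- γ ∈ invSet v → ρ s γ ∈ invSet w
  have htrans1 : ∀ γ ∈ invSet rho v, rho (cs.simple s) γ ∈ invSet rho w := by
    rintro γ ⟨hγp, hγm⟩
    have hγne : γ ≠ sroot s := fun hc => hαnot (hc ▸ ⟨hγp, hγm⟩)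
    refine ⟨pos_of_simple_ne cs rho hrho hsmall hγp hγne, ?_⟩
    have : rho w⁻¹ (rho (cs.simple s) γ) = rho v⁻¹ γ := by
      rw [← rho_mul_apply cs rho hrho, ← hvinv]
    rw [this]
    exact hγm
  -- β ∈ invSet w, β ≠ αs → ρ s β ∈ invSet v
  have htrans2 : ∀ β ∈ invSet rho w, β ≠ sroot s → rho (cs.simple s) β ∈ invSet rho v := by
    rintro β ⟨hβp, hβm⟩ hβne
    refine ⟨pos_of_simple_ne cs rho hrho hsmall hβp hβne, ?_⟩
    have : rho v⁻¹ (rho (cs.simple s) β) = rho w⁻¹ β := by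
      rw [← rho_mul_apply cs rho hrho, hvinv, mul_assoc, cs.simple_mul_simple_self, mul_one]
    rw [this]
    exact hβm
  -- ρ s γ = αs is impossible for positive γ
  have hnotα : ∀ γ : S → ℝ, γ ∈ PhiPlus rho → rho (cs.simple s) γ ≠ sroot s := by
    intro γ hγ hc
    have : γ = -sroot s := by
      rw [← rho_simple_invol cs rho hrho s γ, hc, rho_simple_self cs rho hrho]
    apply not_mem_PhiMinus cs rho hrho hγ
    rw [PhiMinus, Set.mem_setOf_eq, this, neg_neg]
    exact sroot_mem_PhiPlus cs rho hrho s
  constructor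
  · intro h γ hγ
    have h1 := htrans1 γ hγ
    rcases h h1 with hc | ⟨γ', ⟨hγ'A, hγ'ne⟩, heq⟩
    · exact absurd hc (hnotα γ hγ.1)
    · have : γ' = γ := by
        rw [← rho_simple_invol cs rho hrho s γ', heq, rho_simple_invol cs rho hrho]
      rwa [← this]
  · intro h β hβ
    rcases eq_or_ne β (sroot s) with rfl | hβne
    · exact Set.mem_insert _ _
    · right
      refine ⟨rho (cs.simple s) β, ⟨h (htrans2 β hβ hβne), ?_⟩, rho_simple_invol cs rho hrho s β⟩
      simp only [Set.mem_singleton_iff]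
      exact hnotα β hβ.1

end rho

-- ## the length homomorphism
def lenHom (M : CoxeterMatrix S) : ArtinMonoid M →* Multiplicative ℕ :=
  PresentedMonoid.lift (fun _ => Multiplicative.ofAdd 1) (by
    rintro a b ⟨s, t, hst, hm, ha, hb⟩
    subst ha hb
    rw [map_altProd, map_altProd]
    simp only [FreeMonoid.lift_eval_of])

@[simp] theorem lenHom_sigma (M : CoxeterMatrix S) (s : S) :
    lenHom M (sigma M s) = Multiplicative.ofAdd 1 := rfl

-- ## the projection to W
def wHom {M : CoxeterMatrix S} (cs : CoxeterSystem M W) : ArtinMonoid M →* W :=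
  PresentedMonoid.lift cs.simple (by
    rintro a b ⟨s, t, hst, hm, ha, hb⟩
    subst ha hb
    rw [map_altProd, map_altProd]
    simp only [FreeMonoid.lift_eval_of]
    exact altProd_swap (cs.simple_mul_simple_self s) (cs.simple_mul_simple_self t)
      (cs.simple_mul_simple_pow s t))

@[simp] theorem wHom_sigma {M : CoxeterMatrix S} (cs : CoxeterSystem M W) (s : S) :
    wHom cs (sigma M s) = cs.simple s := rfl

theorem length_wHom_le {M : CoxeterMatrix S} (cs : CoxeterSystem M W) (g : ArtinMonoid M) :
    cs.length (wHom cs g) ≤ Multiplicative.toAdd (lenHom M g) := by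
  refine PresentedMonoid.inductionOn g ?_
  intro a
  · induction a using FreeMonoid.recOn with
    | one => simp [map_one]
    | of_mul x a ih =>
      have hmk : (PresentedMonoid.mk (braidRel M)) (FreeMonoid.of x * a) =
          sigma M x * PresentedMonoid.mk (braidRel M) a := by
        rw [map_mul]; rfl
      rw [hmk, map_mul, map_mul]
      calc cs.length (cs.simple x * wHom cs (PresentedMonoid.mk (braidRel M) a))
          ≤ cs.length (cs.simple x) + cs.length (wHom cs (PresentedMonoid.mk (braidRel M) a)) :=
            cs.length_mul_le _ _
        _ ≤ 1 + Multiplicative.toAdd (lenHom M (PresentedMonoid.mk (braidRel M) a)) := by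
            rw [cs.length_simple]; omega
        _ = _ := by simp [lenHom_sigma]

-- ## tau lemmas
section tau
variable {M : CoxeterMatrix S} (cs : CoxeterSystem M W) (tau : W → ArtinMonoid M)
  (htau : ∀ l : List S, cs.IsReduced l → tau (cs.wordProd l) = (l.map (sigma M)).prod)

include htau

theorem wHom_tau (u : W) : wHom cs (tau u) = u := by
  obtain ⟨ω, hred, hu⟩ := cs.exists_reduced_word' u
  subst hu
  rw [htau ω hred, map_list_prod]
  simp only [List.map_map]
  rfl

theorem lenHom_tau (u : W) :
    Multiplicative.toAdd (lenHom M (tau u)) = cs.length u := by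
  obtain ⟨ω, hred, hu⟩ := cs.exists_reduced_word' u
  subst hu
  rw [htau ω hred, map_list_prod]
  have key : ∀ l : List S, Multiplicative.toAdd ((l.map (sigma M)).map (lenHom M)).prod
      = l.length := by
    intro l
    induction l with
    | nil => simp
    | cons x l ih => simp only [List.map_cons, List.prod_cons, toAdd_mul, lenHom_sigma, ih,
        List.length_cons, toAdd_ofAdd]; omega
  rw [key ω]
  exact hred.symm

theorem tau_dvd_of_wle {u v : W} (h : wle cs v u) : mle (tau v) (tau u) := by
  obtain ⟨ω₁, h1, hv⟩ := cs.exists_reduced_word' v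
  obtain ⟨ω₂, h2, hv2⟩ := cs.exists_reduced_word' (v⁻¹ * u)
  have hu : u = cs.wordProd (ω₁ ++ ω₂) := by
    rw [cs.wordProd_append, ← hv, ← hv2]; group
  have hred : cs.IsReduced (ω₁ ++ ω₂) := by
    unfold CoxeterSystem.IsReduced at *
    rw [← hu, List.length_append, ← h1, ← h2, ← hv, ← hv2]
    exact h
  refine ⟨tau (v⁻¹ * u), ?_⟩
  calc tau v * tau (v⁻¹ * u) = (ω₁.map (sigma M)).prod * (ω₂.map (sigma M)).prod := by
        rw [hv2, hv, htau _ h1, htau _ h2]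
    _ = ((ω₁ ++ ω₂).map (sigma M)).prod := by rw [List.map_append, List.prod_append]
    _ = tau u := by rw [hu, htau _ hred]

theorem tau_simple_mul {w : W} {s : S}
    (hlen : cs.length w = cs.length (cs.simple s * w) + 1) :
    tau w = sigma M s * tau (cs.simple s * w) := by
  obtain ⟨ω, hred, hv⟩ := cs.exists_reduced_word' (cs.simple s * w)
  have hw : w = cs.wordProd (s :: ω) := by
    rw [cs.wordProd_cons, ← hv, cs.simple_mul_simple_cancel_left]
  have hred2 : cs.IsReduced (s :: ω) := by
    unfold CoxeterSystem.IsReduced at *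
    rw [← hw, List.length_cons, ← hred, ← hv, hlen]
  calc tau w = ((s :: ω).map (sigma M)).prod := by rw [hw, htau _ hred2]
    _ = sigma M s * (ω.map (sigma M)).prod := by rw [List.map_cons, List.prod_cons]
    _ = sigma M s * tau (cs.simple s * w) := by rw [hv, htau _ hred]

end tau


/-- **Lemma 4.7.** -/
theorem stmt17 {S : Type} [DecidableEq S] [Fintype S] {W : Type} [Group W]
    (M : CoxeterMatrix S) (hsmall : SmallType M) (hnt : NoTriangle M)
    (cs : CoxeterSystem M W)
    (rho : W →* ((S → ℝ) →ₗ[ℝ] (S → ℝ))) (hrho : IsGeomRep M cs rho)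
    (tau : W → ArtinMonoid M)
    (htau : ∀ l : List S, cs.IsReduced l → tau (cs.wordProd l) = (l.map (sigma M)).prod)
    (L : ArtinMonoid M → W)
    (hL : ∀ (f : ArtinMonoid M) (v : W), mle (tau v) f ↔ wle cs v (L f))
    (C : Set (S → ℝ) → W)
    (hC : ∀ A : Set (S → ℝ), ClosedSub M rho A →
      ∀ w : W, invSet rho w ⊆ A ↔ wle cs w (C A))
    (A : Set (S → ℝ)) (hA : ClosedSub M rho A)
    (w : W) (s : S) (hlen : cs.length w = cs.length (cs.simple s * w) + 1) :
    invSet rho w ⊆ insert (sroot s) (rho (cs.simple s) '' (A \ {sroot s})) ↔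
      wle cs w (L (sigma M s * tau (C A))) := by
  set v := cs.simple s * w with hvdef
  rw [stepA cs rho hrho hsmall hlen A, hC A hA v]
  constructor
  · intro hwle
    obtain ⟨g, hg⟩ := tau_dvd_of_wle cs tau htau hwle
    apply (hL (sigma M s * tau (C A)) w).mp
    refine ⟨g, ?_⟩
    rw [tau_simple_mul cs tau htau hlen, mul_assoc, hg]
  · intro hwle
    obtain ⟨g, hg⟩ := (hL (sigma M s * tau (C A)) w).mpr hwle
    have hπ : w * wHom cs g = cs.simple s * C A := by
      have h0 := congrArg (wHom cs) hg
      rwa [map_mul, map_mul, wHom_tau cs tau htau, wHom_sigma, wHom_tau cs tau htau] at h0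
    have hμ : cs.length w + Multiplicative.toAdd (lenHom M g) = 1 + cs.length (C A) := by
      have h0 := congrArg (fun z => Multiplicative.toAdd (lenHom M z)) hg
      simp only [map_mul, toAdd_mul] at h0
      rwa [lenHom_tau cs tau htau, lenHom_sigma, lenHom_tau cs tau htau, toAdd_ofAdd] at h0
    have hg1 : wHom cs g = v⁻¹ * C A := by
      have : wHom cs g = w⁻¹ * (cs.simple s * C A) := by
        rw [← hπ, ← mul_assoc, inv_mul_cancel, one_mul]
      rw [this, hvdef, mul_inv_rev, cs.inv_simple, mul_assoc]
    have hle : cs.length (v⁻¹ * C A) ≤ Multiplicative.toAdd (lenHom M g) := by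
      rw [← hg1]
      exact length_wHom_le cs g
    have htri : cs.length (C A) ≤ cs.length v + cs.length (v⁻¹ * C A) := by
      have h0 := cs.length_mul_le v (v⁻¹ * C A)
      rwa [mul_inv_cancel_left] at h0
    rw [wle]
    omega


end ArtinInj
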